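/- The weighted-cycle lower-bound graph G_{x,y} contains a simple cycle consisting of exactly 8 edges whose total weight equals 2k³ if and only if x and y are not disjoint, i.e., if and only if there exists a pair (i,j) ∈ {0,…,k−1}² with x[i,j] = y[i,j] = 1. -/

import Mathlib

/-- Vertices of the weighted-cycle lower-bound graph.  The side `s : Bool`
distinguishes the `a`'s (`false`) from the `b`'s (`true`), and `ℓ : Bool`
distinguishes index `1` (`false`) from index `2` (`true`).  So
`node false false i = a_1^i`, `node true true i = b_2^i`, and `c s ℓ` is the
center node `c_S` of the corresponding set `S ∈ {A_1, A_2, B_1, B_2}`. -/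
inductive WCVertex (k : ℕ) where
  | node (s ℓ : Bool) (i : Fin k)
  | c (s ℓ : Bool)
deriving DecidableEq

/-- Base relation generating the edges of the weighted-cycle lower-bound graph
`G_{x,y}`: each center `c_S` joined to every node of `S`; the edges
`(c_{A_1}, c_{B_1})` and `(c_{A_2}, c_{B_2})`; the input edge `(a_1^i, a_2^j)`
present iff `x i j = 1` and `(b_1^i, b_2^j)` present iff `y i j = 1`. -/
def wcRel (k : ℕ) (x y : Fin k → Fin k → Bool) (u v : WCVertex k) : Prop :=
  (∃ (s ℓ : Bool) (i : Fin k), u = WCVertex.c s ℓ ∧ v = WCVertex.node s ℓ i) ∨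
  (∃ ℓ : Bool, u = WCVertex.c false ℓ ∧ v = WCVertex.c true ℓ) ∨
  (∃ i j : Fin k, x i j = true ∧
    u = WCVertex.node false false i ∧ v = WCVertex.node false true j) ∨
  (∃ i j : Fin k, y i j = true ∧
    u = WCVertex.node true false i ∧ v = WCVertex.node true true j)

/-- The weighted-cycle lower-bound graph `G_{x,y}`. -/
def wcGraph (k : ℕ) (x y : Fin k → Fin k → Bool) : SimpleGraph (WCVertex k) :=
  SimpleGraph.fromRel (wcRel k x y)

/-- One-directional weight assignment: `k³ + ki + j` on `(a_1^i, a_2^j)`,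
`k³ − (ki + j)` on `(b_1^i, b_2^j)`, and `0` on every other pair. -/
def wcW0 (k : ℕ) : WCVertex k → WCVertex k → ℕ
  | .node false false i, .node false true j => k ^ 3 + k * i.val + j.val
  | .node true false i, .node true true j => k ^ 3 - (k * i.val + j.val)
  | _, _ => 0

/-- The (symmetric) edge-weight function of the weighted-cycle lower-bound graph. -/
def wcW (k : ℕ) (u v : WCVertex k) : ℕ := wcW0 k u v + wcW0 k v u

/-- The total weight of a walk: the sum of the weights of its edges
(one per dart of the walk). -/
def walkWeight {k : ℕ} {x y : Fin k → Fin k → Bool} {u v : WCVertex k}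
    (p : (wcGraph k x y).Walk u v) : ℕ :=
  (p.darts.map (fun d => wcW k d.fst d.snd)).sum


-- auxiliary
def wcClassify {k : ℕ} : WCVertex k → WCVertex k → Option (Bool × Fin k × Fin k)
  | .node false false i, .node false true j => some (false, i, j)
  | .node false true j, .node false false i => some (false, i, j)
  | .node true false i, .node true true j => some (true, i, j)
  | .node true true j, .node true false i => some (true, i, j)
  | _, _ => none

def wcClassW (k : ℕ) : Option (Bool × Fin k × Fin k) → ℕ
  | some (false, i, j) => k ^ 3 + k * i.val + j.val
  | some (true, i, j) => k ^ 3 - (k * i.val + j.val)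
  | none => 0

lemma wcW_eq_classW {k : ℕ} (u v : WCVertex k) :
    wcW k u v = wcClassW k (wcClassify u v) := by
  rcases u with ⟨s, l, i⟩ | ⟨s, l⟩ <;> rcases v with ⟨t, m, j⟩ | ⟨t, m⟩ <;>
    cases s <;> cases l <;> first
      | (cases t <;> cases m <;> simp [wcW, wcW0, wcClassify, wcClassW])
      | simp [wcW, wcW0, wcClassify, wcClassW]

def wcEdgeOf {k : ℕ} : Bool × Fin k × Fin k → Sym2 (WCVertex k)
  | (b, i, j) => s(WCVertex.node b false i, WCVertex.node b true j)

lemma wcClassify_edge {k : ℕ} {u v : WCVertex k} {c : Bool × Fin k × Fin k}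
    (h : wcClassify u v = some c) : s(u, v) = wcEdgeOf c := by
  rcases u with ⟨s, l, i⟩ | ⟨s, l⟩ <;> rcases v with ⟨t, m, j⟩ | ⟨t, m⟩ <;>
    cases s <;> cases l <;> (try (cases t <;> cases m)) <;>
    simp_all [wcClassify, wcEdgeOf] <;>
    (try subst h) <;> simp [Sym2.eq_iff]

lemma wcClassify_adj {k : ℕ} {x y : Fin k → Fin k → Bool} {u v : WCVertex k}
    {c : Bool × Fin k × Fin k} (h : (wcGraph k x y).Adj u v)
    (hc : wcClassify u v = some c) :
    if c.1 then y c.2.1 c.2.2 = true else x c.2.1 c.2.2 = true := by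
  rw [wcGraph, SimpleGraph.fromRel_adj] at h
  obtain ⟨-, h⟩ := h
  rcases u with ⟨s, l, i⟩ | ⟨s, l⟩ <;> rcases v with ⟨t, m, j⟩ | ⟨t, m⟩ <;>
    cases s <;> cases l <;> (try (cases t <;> cases m)) <;>
    simp_all [wcClassify, wcRel] <;> subst hc <;> simp_all

lemma wc_sum_classify {k : ℕ} (P : List (WCVertex k × WCVertex k)) :
    (P.map (fun q => wcW k q.1 q.2)).sum =
      ((P.filterMap (fun q => wcClassify q.1 q.2)).map (fun c => wcClassW k (some c))).sum := by
  induction P with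
  | nil => simp
  | cons q P ih =>
    rcases hq : wcClassify q.1 q.2 with _ | c <;>
      simp [List.filterMap_cons, hq, ih, wcW_eq_classW q.1 q.2, wcClassW]

lemma wc_nodup_classify {k : ℕ} (P : List (WCVertex k × WCVertex k))
    (hP : (P.map (fun q => s(q.1, q.2))).Nodup) :
    (P.filterMap (fun q => wcClassify q.1 q.2)).Nodup := by
  induction P with
  | nil => simp
  | cons q P ih =>
    simp only [List.map_cons, List.nodup_cons] at hP
    rcases hq : wcClassify q.1 q.2 with _ | c
    · simpa [List.filterMap_cons, hq] using ih hP.2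
    · rw [List.filterMap_cons, hq]
      refine List.nodup_cons.mpr ⟨?_, ih hP.2⟩
      intro hmem
      obtain ⟨q', hq', hc'⟩ := List.mem_filterMap.mp hmem
      apply hP.1
      have he : s(q.1, q.2) = s(q'.1, q'.2) := by
        rw [wcClassify_edge hq, wcClassify_edge hc']
      rw [he]
      exact List.mem_map_of_mem hq'

lemma wc_off_lt {k : ℕ} (i j : Fin k) : k * i.val + j.val < k ^ 2 := by
  have hi := i.isLt; have hj := j.isLt
  nlinarith

lemma wc_off_inj {k : ℕ} {i j i' j' : Fin k}
    (h : k * i.val + j.val = k * i'.val + j'.val) : i = i' ∧ j = j' := by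
  have h1 : ∀ (a b : Fin k), (k * a.val + b.val) / k = a.val := fun a b => by
    rw [Nat.mul_add_div a.pos, Nat.div_eq_of_lt b.isLt, Nat.add_zero]
  have h2 : ∀ (a b : Fin k), (k * a.val + b.val) % k = b.val := fun a b => by
    rw [Nat.mul_add_mod, Nat.mod_eq_of_lt b.isLt]
  refine ⟨Fin.ext ?_, Fin.ext ?_⟩
  · rw [← h1 i j, ← h1 i' j', h]
  · rw [← h2 i j, ← h2 i' j', h]

lemma wc_classW_lt {k : ℕ} (hk : 3 ≤ k) (c : Bool × Fin k × Fin k) :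
    wcClassW k (some c) + 1 ≤ k ^ 3 + k ^ 2 := by
  obtain ⟨b, i, j⟩ := c
  have ho := wc_off_lt i j
  cases b <;> simp [wcClassW]
  · linarith
  · have := Nat.sub_le (k ^ 3) (k * i.val + j.val)
    have hB : 0 < k ^ 2 := by positivity
    linarith

lemma wc_classW_gt {k : ℕ} (hk : 3 ≤ k) (c : Bool × Fin k × Fin k) :
    k ^ 3 + 1 ≤ wcClassW k (some c) + k ^ 2 := by
  obtain ⟨b, i, j⟩ := c
  have ho := wc_off_lt i j
  have hBA : k ^ 2 ≤ k ^ 3 := Nat.pow_le_pow_right (by omega) (by omega)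
  have hB : 0 < k ^ 2 := by positivity
  cases b <;> simp [wcClassW]
  · linarith [Nat.zero_le (k * i.val + j.val)]
  · have hsub : k ^ 3 - (k * i.val + j.val) + (k * i.val + j.val) = k ^ 3 :=
      Nat.sub_add_cancel (by linarith)
    linarith

lemma wc_main_arith {k : ℕ} (hk : 3 ≤ k) {x y : Fin k → Fin k → Bool}
    (C : List (Bool × Fin k × Fin k))
    (hsum : (C.map (fun c => wcClassW k (some c))).sum = 2 * k ^ 3)
    (hnd : C.Nodup)
    (hmem : ∀ c ∈ C, if c.1 then y c.2.1 c.2.2 = true else x c.2.1 c.2.2 = true) :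
    ∃ i j : Fin k, x i j = true ∧ y i j = true := by
  have hk3 : 3 * k ^ 2 ≤ k ^ 3 := by nlinarith
  have hk2 : 9 ≤ k ^ 2 := by nlinarith
  have hBA : k ^ 2 ≤ k ^ 3 := by linarith
  rcases C with _ | ⟨c1, C⟩
  · exfalso; simp at hsum; linarith
  rcases C with _ | ⟨c2, C⟩
  · exfalso
    simp at hsum
    have := wc_classW_lt hk c1
    linarith
  rcases C with _ | ⟨c3, C⟩
  case cons.cons.cons =>
    exfalso
    have h1 := wc_classW_gt hk c1
    have h2 := wc_classW_gt hk c2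
    have h3 := wc_classW_gt hk c3
    have hnn : 0 ≤ ((C.map (fun c => wcClassW k (some c))).sum) := Nat.zero_le _
    simp [List.sum_cons] at hsum
    linarith
  · have hne : c1 ≠ c2 := by simp [List.nodup_cons] at hnd; tauto
    have hm1 := hmem c1 (by simp)
    have hm2 := hmem c2 (by simp)
    obtain ⟨b1, i1, j1⟩ := c1; obtain ⟨b2, i2, j2⟩ := c2
    have o1 := wc_off_lt i1 j1
    have o2 := wc_off_lt i2 j2
    have hs1 : k ^ 3 - (k * i1.val + j1.val) + (k * i1.val + j1.val) = k ^ 3 :=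
      Nat.sub_add_cancel (by linarith)
    have hs2 : k ^ 3 - (k * i2.val + j2.val) + (k * i2.val + j2.val) = k ^ 3 :=
      Nat.sub_add_cancel (by linarith)
    have n1 : 0 ≤ k * i1.val + j1.val := Nat.zero_le _
    have n2 : 0 ≤ k * i2.val + j2.val := Nat.zero_le _
    cases b1 <;> cases b2 <;> simp [wcClassW] at hsum hm1 hm2
    · exfalso
      obtain ⟨hi, hj⟩ := wc_off_inj
        (show k * i1.val + j1.val = k * i2.val + j2.val by
          zify at hsum ⊢; linarith)
      exact hne (by rw [hi, hj])
    · obtain ⟨hi, hj⟩ := wc_off_inj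
        (show k * i1.val + j1.val = k * i2.val + j2.val by linarith)
      exact ⟨i1, j1, hm1, by rw [hi, hj]; exact hm2⟩
    · obtain ⟨hi, hj⟩ := wc_off_inj
        (show k * i2.val + j2.val = k * i1.val + j1.val by linarith)
      exact ⟨i2, j2, hm2, by rw [hi, hj]; exact hm1⟩
    · exfalso
      obtain ⟨hi, hj⟩ := wc_off_inj
        (show k * i1.val + j1.val = k * i2.val + j2.val by
          zify at hs1 hs2 hsum ⊢; linarith)
      exact hne (by rw [hi, hj])


/-- the weighted-cycle lower-bound graph `G_{x,y}` (`k ≥ 3`)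
contains a simple cycle with exactly `8` edges whose total weight equals `2k³`
iff `x` and `y` are not disjoint, i.e. iff there is a pair `(i, j)` with
`x i j = y i j = 1`. -/
theorem wcGraph_eight_cycle_iff_not_disjoint (k : ℕ) (hk : 3 ≤ k)
    (x y : Fin k → Fin k → Bool) :
    (∃ (v : WCVertex k) (p : (wcGraph k x y).Walk v v),
      p.IsCycle ∧ p.length = 8 ∧ walkWeight p = 2 * k ^ 3) ↔
    ∃ i j : Fin k, x i j = true ∧ y i j = true := by
  constructor
  · rintro ⟨v, p, hcyc, -, hw⟩
    classical
    set P : List (WCVertex k × WCVertex k) :=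
      p.darts.map (fun d => (d.fst, d.snd)) with hPdef
    have hadjP : ∀ q ∈ P, (wcGraph k x y).Adj q.1 q.2 := by
      intro q hq
      obtain ⟨d, hd, rfl⟩ := List.mem_map.mp hq
      exact d.adj
    have hedges : P.map (fun q => s(q.1, q.2)) = p.edges := by
      rw [hPdef, List.map_map]
      rfl
    have hnodupE : (P.map (fun q => s(q.1, q.2))).Nodup := by
      rw [hedges]; exact hcyc.edges_nodup
    have hwP : (P.map (fun q => wcW k q.1 q.2)).sum = 2 * k ^ 3 := by
      rw [hPdef, List.map_map]
      exact hw
    refine wc_main_arith hk (P.filterMap (fun q => wcClassify q.1 q.2)) ?_ ?_ ?_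
    · rw [← wc_sum_classify]; exact hwP
    · exact wc_nodup_classify P hnodupE
    · intro c hc
      obtain ⟨q, hq, hcl⟩ := List.mem_filterMap.mp hc
      exact wcClassify_adj (hadjP q hq) hcl
  · rintro ⟨i, j, hx, hy⟩
    have hadj : ∀ u v : WCVertex k, u ≠ v → wcRel k x y u v → (wcGraph k x y).Adj u v :=
      fun u v h1 h2 => (SimpleGraph.fromRel_adj _ _ _).mpr ⟨h1, Or.inl h2⟩
    have A01 : (wcGraph k x y).Adj (.node false false i) (.node false true j) :=
      hadj _ _ (by simp) (Or.inr (Or.inr (Or.inl ⟨i, j, hx, rfl, rfl⟩)))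
    have A12 : (wcGraph k x y).Adj (.node false true j) (.c false true) :=
      (hadj _ _ (by simp) (Or.inl ⟨false, true, j, rfl, rfl⟩)).symm
    have A23 : (wcGraph k x y).Adj (.c false true) (.c true true) :=
      hadj _ _ (by simp) (Or.inr (Or.inl ⟨true, rfl, rfl⟩))
    have A34 : (wcGraph k x y).Adj (.c true true) (.node true true j) :=
      hadj _ _ (by simp) (Or.inl ⟨true, true, j, rfl, rfl⟩)
    have A45 : (wcGraph k x y).Adj (.node true true j) (.node true false i) :=
      (hadj _ _ (by simp) (Or.inr (Or.inr (Or.inr ⟨i, j, hy, rfl, rfl⟩)))).symm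
    have A56 : (wcGraph k x y).Adj (.node true false i) (.c true false) :=
      (hadj _ _ (by simp) (Or.inl ⟨true, false, i, rfl, rfl⟩)).symm
    have A67 : (wcGraph k x y).Adj (.c true false) (.c false false) :=
      (hadj _ _ (by simp) (Or.inr (Or.inl ⟨false, rfl, rfl⟩))).symm
    have A70 : (wcGraph k x y).Adj (.c false false) (.node false false i) :=
      hadj _ _ (by simp) (Or.inl ⟨false, false, i, rfl, rfl⟩)
    refine ⟨WCVertex.node false false i,
      .cons A01 (.cons A12 (.cons A23 (.cons A34 (.cons A45 (.cons A56
        (.cons A67 (.cons A70 .nil))))))), ?_, ?_, ?_⟩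
    · rw [SimpleGraph.Walk.isCycle_def]
      refine ⟨?_, by simp, ?_⟩
      · rw [SimpleGraph.Walk.isTrail_def]
        simp [Sym2.eq_iff]
      · simp
    · simp
    · have ho := wc_off_lt i j
      have hBA : k ^ 2 ≤ k ^ 3 := Nat.pow_le_pow_right (by omega) (by omega)
      have hsub : k ^ 3 - (k * i.val + j.val) + (k * i.val + j.val) = k ^ 3 :=
        Nat.sub_add_cancel (by linarith)
      simp [walkWeight, wcW, wcW0]
      linarith
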